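/- For any Riemannian manifold, the Laplacian of the symmetric 2-tensor R_{iabc}R_{jabc} satisfies: (R_{iabc}R_{jabc})_{;kk} = 2B_{ij} + 8R̊_{ij} + 2R̂_{ij} + 4ρ_{cd}R_{iabc}R_{jabd} + 2ρ_{ic;ab}R_{jabc} + 2ρ_{jc;ab}R_{iabc} + 2ρ_{ab;ic}R_{jabc} + 2ρ_{ab;jc}R_{iabc}, where B_{ij} = R_{ibcd;a}R_{jbcd;a}, R̂_{ij} = R_{ibac}R_{jbuv}R_{acuv}, R̊_{ij} = R_{iabc}R_{jubv}R_{aucv}. -/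

import Mathlib

open scoped BigOperators

/-- Kronecker delta (the metric in a local orthonormal frame). -/
def kd {m : ℕ} (i j : Fin m) : ℝ := if i = j then 1 else 0

/-- The pointwise curvature data (the Riemann curvature tensor together with its
first and second covariant derivatives, expressed in a local orthonormal frame)
of an `m`-dimensional Riemannian manifold `M`, subject to the standard
symmetries, the first and second Bianchi identities and the Ricci commutation
identity.  The sign convention is `R(X,Y)Z = [∇_X,∇_Y]Z − ∇_{[X,Y]}Z`. -/
structure RiemannModel (m : ℕ) (M : Type) where
  R : M → Fin m → Fin m → Fin m → Fin m → ℝ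
  dR : M → Fin m → Fin m → Fin m → Fin m → Fin m → ℝ
  d2R : M → Fin m → Fin m → Fin m → Fin m → Fin m → Fin m → ℝ
  R_antisymm₁ : ∀ p a b c d, R p b a c d = - R p a b c d
  R_antisymm₂ : ∀ p a b c d, R p a b d c = - R p a b c d
  R_pairSymm : ∀ p a b c d, R p c d a b = R p a b c d
  R_bianchi₁ : ∀ p a b c d, R p a b c d + R p b c a d + R p c a b d = 0
  dR_antisymm₁ : ∀ p a b c d e, dR p b a c d e = - dR p a b c d e
  dR_antisymm₂ : ∀ p a b c d e, dR p a b d c e = - dR p a b c d e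
  dR_pairSymm : ∀ p a b c d e, dR p c d a b e = dR p a b c d e
  dR_bianchi₁ : ∀ p a b c d e, dR p a b c d e + dR p b c a d e + dR p c a b d e = 0
  bianchi₂ : ∀ p a b c d e, dR p a b c d e + dR p a b d e c + dR p a b e c d = 0
  d2R_antisymm₁ : ∀ p a b c d e f, d2R p b a c d e f = - d2R p a b c d e f
  d2R_antisymm₂ : ∀ p a b c d e f, d2R p a b d c e f = - d2R p a b c d e f
  d2R_pairSymm : ∀ p a b c d e f, d2R p c d a b e f = d2R p a b c d e f
  d2R_bianchi₂ : ∀ p a b c d e f,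
    d2R p a b c d e f + d2R p a b d e c f + d2R p a b e c d f = 0
  ricci_comm : ∀ p a b c d e f,
    d2R p a b c d e f - d2R p a b c d f e =
      ∑ u, (R p e f a u * R p u b c d + R p e f b u * R p a u c d +
            R p e f c u * R p a b u d + R p e f d u * R p a b c u)

namespace RiemannModel

variable {m : ℕ} {M : Type} (V : RiemannModel m M)

/-- Ricci tensor `ρ_{ij} = R_{aija}`. -/
def ric (p : M) (i j : Fin m) : ℝ := ∑ a, V.R p a i j a

/-- Scalar curvature `τ`. -/
def scal (p : M) : ℝ := ∑ i, V.ric p i i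

/-- `|R|² = R_{abcd}R_{abcd}`. -/
def normR2 (p : M) : ℝ := ∑ a, ∑ b, ∑ c, ∑ d, (V.R p a b c d) ^ 2

/-- `|ρ|² = ρ_{ab}ρ_{ab}`. -/
def normRic2 (p : M) : ℝ := ∑ a, ∑ b, (V.ric p a b) ^ 2

/-- `|∇R|² = R_{abcd;e}R_{abcd;e}`. -/
def normDR2 (p : M) : ℝ := ∑ a, ∑ b, ∑ c, ∑ d, ∑ e, (V.dR p a b c d e) ^ 2

/-- `R_{iabc}R_{jabc}`. -/
def RR2 (p : M) (i j : Fin m) : ℝ := ∑ a, ∑ b, ∑ c, V.R p i a b c * V.R p j a b c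

/-- `R̂ = R_{abcd}R_{abuv}R_{cduv}`. -/
def Rhat (p : M) : ℝ :=
  ∑ a, ∑ b, ∑ c, ∑ d, ∑ u, ∑ v, V.R p a b c d * V.R p a b u v * V.R p c d u v

/-- `R̊ = R_{abcd}R_{aucv}R_{budv}`. -/
def Rring (p : M) : ℝ :=
  ∑ a, ∑ b, ∑ c, ∑ d, ∑ u, ∑ v, V.R p a b c d * V.R p a u c v * V.R p b u d v

/-- `R̂_{ij} = R_{ibac}R_{jbuv}R_{acuv}`. -/
def RhatT (p : M) (i j : Fin m) : ℝ :=
  ∑ a, ∑ b, ∑ c, ∑ u, ∑ v, V.R p i b a c * V.R p j b u v * V.R p a c u v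

/-- `R̊_{ij} = R_{iabc}R_{jubv}R_{aucv}`. -/
def RringT (p : M) (i j : Fin m) : ℝ :=
  ∑ a, ∑ b, ∑ c, ∑ u, ∑ v, V.R p i a b c * V.R p j u b v * V.R p a u c v

/-- `Ř_{ij} = R_{iuvj}R_{abcu}R_{abcv}`. -/
def RcheckT (p : M) (i j : Fin m) : ℝ :=
  ∑ u, ∑ v, ∑ a, ∑ b, ∑ c, V.R p i u v j * V.R p a b c u * V.R p a b c v

/-- `A_{ij} = R_{abcd;i}R_{abcd;j}`. -/
def At (p : M) (i j : Fin m) : ℝ :=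
  ∑ a, ∑ b, ∑ c, ∑ d, V.dR p a b c d i * V.dR p a b c d j

/-- `B_{ij} = R_{ibcd;a}R_{jbcd;a}`. -/
def Bt (p : M) (i j : Fin m) : ℝ :=
  ∑ a, ∑ b, ∑ c, ∑ d, V.dR p i b c d a * V.dR p j b c d a

/-- Second covariant derivative of the Ricci tensor, `ρ_{ij;ab}`. -/
def ric2 (p : M) (i j a b : Fin m) : ℝ := ∑ u, V.d2R p u i j u a b

/-- `Q_{ijkl} = R_{aijb}R_{bkla}`. -/
def Q (p : M) (i j k l : Fin m) : ℝ := ∑ a, ∑ b, V.R p a i j b * V.R p b k l a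

/-- The integrand of condition `H₃`:
`32 R_{aijb}R_{bklc}R_{cuva} − 9 R_{aijb;k}R_{buva;l}`. -/
def C (p : M) (i j k l u v : Fin m) : ℝ :=
  32 * (∑ a, ∑ b, ∑ c, V.R p a i j b * V.R p b k l c * V.R p c u v a)
    - 9 * (∑ a, ∑ b, V.dR p a i j b k * V.dR p b u v a l)

/-- `𝔖(g_{ij}g_{kl})` : symmetrization over all permutations of `i,j,k,l`. -/
def symG2 {m : ℕ} (i j k l : Fin m) : ℝ :=
  ∑ σ : Equiv.Perm (Fin 4),
    kd (![i,j,k,l] (σ 0)) (![i,j,k,l] (σ 1)) *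
      kd (![i,j,k,l] (σ 2)) (![i,j,k,l] (σ 3))

/-- `𝔖(R_{aijb}R_{bkla})` : symmetrization over all permutations of `i,j,k,l`. -/
def symQ (p : M) (i j k l : Fin m) : ℝ :=
  ∑ σ : Equiv.Perm (Fin 4),
    V.Q p (![i,j,k,l] (σ 0)) (![i,j,k,l] (σ 1)) (![i,j,k,l] (σ 2)) (![i,j,k,l] (σ 3))

/-- `𝔖(g_{ij}g_{kl}g_{uv})`. -/
def symG3 {m : ℕ} (i j k l u v : Fin m) : ℝ :=
  ∑ σ : Equiv.Perm (Fin 6),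
    kd (![i,j,k,l,u,v] (σ 0)) (![i,j,k,l,u,v] (σ 1)) *
      kd (![i,j,k,l,u,v] (σ 2)) (![i,j,k,l,u,v] (σ 3)) *
        kd (![i,j,k,l,u,v] (σ 4)) (![i,j,k,l,u,v] (σ 5))

/-- `𝔖(32R_{aijb}R_{bklc}R_{cuva} − 9R_{aijb;k}R_{buva;l})`. -/
def symC (p : M) (i j k l u v : Fin m) : ℝ :=
  ∑ σ : Equiv.Perm (Fin 6),
    V.C p (![i,j,k,l,u,v] (σ 0)) (![i,j,k,l,u,v] (σ 1)) (![i,j,k,l,u,v] (σ 2))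
      (![i,j,k,l,u,v] (σ 3)) (![i,j,k,l,u,v] (σ 4)) (![i,j,k,l,u,v] (σ 5))

/-- Ledger's condition `H₁`. -/
def H1 : Prop := ∃ Λ : ℝ, ∀ p i j, V.ric p i j = Λ * kd i j

/-- Ledger's condition `H₂`. -/
def H2 : Prop := ∃ Λ : ℝ, ∀ p i j k l, V.symQ p i j k l = Λ * symG2 i j k l

/-- Ledger's condition `H₃`. -/
def H3 : Prop :=
  ∃ Λ : ℝ, ∀ p i j k l u v, V.symC p i j k l u v = Λ * symG3 i j k l u v

/-- The Einstein condition `ρ_{ij} = (τ/m) g_{ij}`. -/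
def einstein : Prop := ∀ p i j, V.ric p i j = V.scal p / m * kd i j

end RiemannModel

/-!
Expanding the Laplacian by the product rule leaves `2B_{ij}` plus the contraction
`R_{iabc;kk}R_{jabc}` and its mirror image in `i, j`. By the second Bianchi identity and the
antisymmetry of `R_{jabc}` in `b, c`, that contraction is `2R_{iabk;ck}R_{jabc}`. Commuting the
derivatives by the Ricci identity turns `R_{iabk;ck}` into the divergence `R_{iabk;kc}`, which the
contracted second Bianchi identity expresses through `∇²ρ`, plus four cubic curvature terms; up to
relabelling, the first Bianchi identity and the symmetries of `R`, these are `2R̊_{ij}`, `R̂_{ij}/2`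
and `ρ_{cd}R_{iabc}R_{jabd}`.
-/

section NestedSums

variable {ι β : Type*} [Fintype ι] [AddCommMonoid β]

theorem sum_fin_succ_pi {n : ℕ} (f : (Fin (n + 1) → ι) → β) :
    ∑ v, f v = ∑ x, ∑ w : Fin n → ι, f (Fin.cons x w) := by
  rw [← Fintype.sum_prod_type']
  exact Fintype.sum_equiv (Fin.consEquiv fun _ => ι).symm _ _ fun v => by
    simp [Fin.consEquiv, Fin.cons_self_tail]

theorem sum_pi_comp_bijective {n : ℕ} (σ : Fin n → Fin n) (hσ : σ.Bijective)
    (f : (Fin n → ι) → β) : ∑ v, f (v ∘ σ) = ∑ v, f v :=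
  Fintype.sum_equiv ((Equiv.ofBijective σ hσ).symm.arrowCongr (Equiv.refl ι)) _ _ fun _ => rfl

theorem sum₃_eq_sum_pi (F : ι → ι → ι → β) :
    ∑ a, ∑ b, ∑ c, F a b c = ∑ v : Fin 3 → ι, F (v 0) (v 1) (v 2) := by
  simp only [sum_fin_succ_pi, Fintype.sum_unique]
  rfl

theorem sum₄_eq_sum_pi (F : ι → ι → ι → ι → β) :
    ∑ a, ∑ b, ∑ c, ∑ d, F a b c d = ∑ v : Fin 4 → ι, F (v 0) (v 1) (v 2) (v 3) := by
  simp only [sum_fin_succ_pi, Fintype.sum_unique]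
  rfl

theorem sum₅_eq_sum_pi (F : ι → ι → ι → ι → ι → β) :
    ∑ a, ∑ b, ∑ c, ∑ d, ∑ e, F a b c d e =
      ∑ v : Fin 5 → ι, F (v 0) (v 1) (v 2) (v 3) (v 4) := by
  simp only [sum_fin_succ_pi, Fintype.sum_unique]
  rfl

theorem sum₃_reindex (F G : ι → ι → ι → β) (σ : Fin 3 → Fin 3) (hσ : σ.Bijective)
    (h : ∀ v : Fin 3 → ι, F (v (σ 0)) (v (σ 1)) (v (σ 2)) = G (v 0) (v 1) (v 2)) :
    ∑ a, ∑ b, ∑ c, F a b c = ∑ a, ∑ b, ∑ c, G a b c := by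
  rw [sum₃_eq_sum_pi, sum₃_eq_sum_pi, ← sum_pi_comp_bijective σ hσ]
  exact Finset.sum_congr rfl fun v _ => h v

theorem sum₄_reindex (F G : ι → ι → ι → ι → β) (σ : Fin 4 → Fin 4) (hσ : σ.Bijective)
    (h : ∀ v : Fin 4 → ι, F (v (σ 0)) (v (σ 1)) (v (σ 2)) (v (σ 3)) =
      G (v 0) (v 1) (v 2) (v 3)) :
    ∑ a, ∑ b, ∑ c, ∑ d, F a b c d = ∑ a, ∑ b, ∑ c, ∑ d, G a b c d := by
  rw [sum₄_eq_sum_pi, sum₄_eq_sum_pi, ← sum_pi_comp_bijective σ hσ]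
  exact Finset.sum_congr rfl fun v _ => h v

theorem sum₅_reindex (F G : ι → ι → ι → ι → ι → β) (σ : Fin 5 → Fin 5) (hσ : σ.Bijective)
    (h : ∀ v : Fin 5 → ι, F (v (σ 0)) (v (σ 1)) (v (σ 2)) (v (σ 3)) (v (σ 4)) =
      G (v 0) (v 1) (v 2) (v 3) (v 4)) :
    ∑ a, ∑ b, ∑ c, ∑ d, ∑ e, F a b c d e = ∑ a, ∑ b, ∑ c, ∑ d, ∑ e, G a b c d e := by
  rw [sum₅_eq_sum_pi, sum₅_eq_sum_pi, ← sum_pi_comp_bijective σ hσ]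
  exact Finset.sum_congr rfl fun v _ => h v

end NestedSums

namespace RiemannModel

variable {m : ℕ} {M : Type} (V : RiemannModel m M) (p : M)

theorem R_swap_pairs (a b c d : Fin m) : V.R p b a d c = V.R p a b c d := by
  rw [V.R_antisymm₁, V.R_antisymm₂, neg_neg]

theorem R_reverse (a b c d : Fin m) : V.R p d c b a = V.R p a b c d := by
  rw [V.R_pairSymm p b a d c, V.R_swap_pairs]

theorem ric_symm (i j : Fin m) : V.ric p i j = V.ric p j i :=
  Finset.sum_congr rfl fun a _ => by
    rw [V.R_antisymm₂ p a i a j, ← V.R_antisymm₁ p a i a j, V.R_pairSymm p i a a j]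

theorem ric2_symm (i j a b : Fin m) : V.ric2 p i j a b = V.ric2 p j i a b :=
  Finset.sum_congr rfl fun u _ => by
    rw [V.d2R_antisymm₂ p u i u j a b, ← V.d2R_antisymm₁ p u i u j a b,
      V.d2R_pairSymm p i u u j a b]

theorem sum_d2R_div (i a b c : Fin m) :
    ∑ k, V.d2R p i a b k k c = V.ric2 p a b i c - V.ric2 p b i a c := by
  rw [ric2, ric2, ← Finset.sum_sub_distrib]
  refine Finset.sum_congr rfl fun k _ => ?_
  linarith [V.d2R_bianchi₂ p b k i a k c, V.d2R_pairSymm p i a b k k c,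
    V.d2R_pairSymm p a k b k i c, V.d2R_antisymm₁ p k a b k i c,
    V.d2R_antisymm₁ p k b k i a c, V.d2R_antisymm₂ p k b i k a c]

theorem RringT_symm (i j : Fin m) : V.RringT p j i = V.RringT p i j := by
  refine sum₅_reindex _ _ ![3, 1, 4, 0, 2] (by decide) fun v => ?_
  show V.R p j (v 3) (v 1) (v 4) * V.R p i (v 0) (v 1) (v 2) * V.R p (v 3) (v 0) (v 4) (v 2)
    = V.R p i (v 0) (v 1) (v 2) * V.R p j (v 3) (v 1) (v 4) * V.R p (v 0) (v 3) (v 2) (v 4)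
  rw [V.R_swap_pairs p (v 0) (v 3) (v 2) (v 4)]
  ring

theorem RhatT_symm (i j : Fin m) : V.RhatT p j i = V.RhatT p i j := by
  refine sum₅_reindex _ _ ![3, 1, 4, 0, 2] (by decide) fun v => ?_
  show V.R p j (v 1) (v 3) (v 4) * V.R p i (v 1) (v 0) (v 2) * V.R p (v 3) (v 4) (v 0) (v 2)
    = V.R p i (v 1) (v 0) (v 2) * V.R p j (v 1) (v 3) (v 4) * V.R p (v 0) (v 2) (v 3) (v 4)
  rw [V.R_pairSymm p (v 0) (v 2) (v 3) (v 4)]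
  ring

theorem sum_ric_mul_R_mul_R_symm (i j : Fin m) :
    ∑ c, ∑ d, ∑ a, ∑ b, V.ric p c d * V.R p j a b c * V.R p i a b d
      = ∑ c, ∑ d, ∑ a, ∑ b, V.ric p c d * V.R p i a b c * V.R p j a b d := by
  refine sum₄_reindex _ _ ![1, 0, 2, 3] (by decide) fun v => ?_
  show V.ric p (v 1) (v 0) * V.R p j (v 2) (v 3) (v 1) * V.R p i (v 2) (v 3) (v 0)
    = V.ric p (v 0) (v 1) * V.R p i (v 2) (v 3) (v 0) * V.R p j (v 2) (v 3) (v 1)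
  rw [V.ric_symm p (v 1) (v 0)]
  ring

theorem sum_laplacian_R_mul_R_eq_two_mul_sum (i j : Fin m) :
    ∑ k, ∑ a, ∑ b, ∑ c, V.d2R p i a b c k k * V.R p j a b c
      = 2 * ∑ k, ∑ a, ∑ b, ∑ c, V.d2R p i a b k c k * V.R p j a b c := by
  have hbianchi : ∀ k a b c,
      V.d2R p i a b c k k = V.d2R p i a b k c k - V.d2R p i a c k b k := fun k a b c => by
    linarith [V.d2R_bianchi₂ p i a b c k k, V.d2R_antisymm₂ p i a k b c k]
  have hswap : ∑ k, ∑ a, ∑ b, ∑ c, V.d2R p i a c k b k * V.R p j a b c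
      = -∑ k, ∑ a, ∑ b, ∑ c, V.d2R p i a b k c k * V.R p j a b c := by
    simp only [← Finset.sum_neg_distrib]
    refine sum₄_reindex _ _ ![0, 1, 3, 2] (by decide) fun v => ?_
    show V.d2R p i (v 1) (v 2) (v 0) (v 3) (v 0) * V.R p j (v 1) (v 3) (v 2)
      = -(V.d2R p i (v 1) (v 2) (v 0) (v 3) (v 0) * V.R p j (v 1) (v 2) (v 3))
    rw [V.R_antisymm₂]
    ring
  simp only [hbianchi, sub_mul, Finset.sum_sub_distrib, hswap]
  ring

theorem sum_d2R_commute_mul_R (i j : Fin m) :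
    ∑ k, ∑ a, ∑ b, ∑ c, V.d2R p i a b k c k * V.R p j a b c
      = ∑ k, ∑ a, ∑ b, ∑ c, V.d2R p i a b k k c * V.R p j a b c
        + ∑ k, ∑ a, ∑ b, ∑ c, ∑ u, V.R p c k i u * V.R p u a b k * V.R p j a b c
        + ∑ k, ∑ a, ∑ b, ∑ c, ∑ u, V.R p c k a u * V.R p i u b k * V.R p j a b c
        + ∑ k, ∑ a, ∑ b, ∑ c, ∑ u, V.R p c k b u * V.R p i a u k * V.R p j a b c
        + ∑ k, ∑ a, ∑ b, ∑ c, ∑ u, V.R p c k k u * V.R p i a b u * V.R p j a b c := by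
  simp only [← Finset.sum_add_distrib]
  refine Finset.sum_congr rfl fun k _ => Finset.sum_congr rfl fun a _ =>
    Finset.sum_congr rfl fun b _ => Finset.sum_congr rfl fun c _ => ?_
  rw [sub_eq_iff_eq_add'.mp (V.ricci_comm p i a b k c k), add_mul, Finset.sum_mul]
  simp only [add_mul, Finset.sum_add_distrib]
  ring

theorem sum_d2R_div_mul_R (i j : Fin m) :
    ∑ k, ∑ a, ∑ b, ∑ c, V.d2R p i a b k k c * V.R p j a b c
      = ∑ a, ∑ b, ∑ c, V.ric2 p a b i c * V.R p j a b c
        + ∑ a, ∑ b, ∑ c, V.ric2 p i c a b * V.R p j a b c := by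
  have hswap : ∑ a, ∑ b, ∑ c, V.ric2 p b i a c * V.R p j a b c
      = -∑ a, ∑ b, ∑ c, V.ric2 p i c a b * V.R p j a b c := by
    simp only [← Finset.sum_neg_distrib]
    refine sum₃_reindex _ _ ![0, 2, 1] (by decide) fun v => ?_
    show V.ric2 p (v 2) i (v 0) (v 1) * V.R p j (v 0) (v 2) (v 1)
      = -(V.ric2 p i (v 2) (v 0) (v 1) * V.R p j (v 0) (v 1) (v 2))
    rw [V.ric2_symm p (v 2) i, V.R_antisymm₂]
    ring
  rw [sum₄_reindex _ (fun a b c k => V.d2R p i a b k k c * V.R p j a b c) ![3, 0, 1, 2]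
    (by decide) fun v => rfl]
  simp only [← Finset.sum_mul, sum_d2R_div, sub_mul, Finset.sum_sub_distrib, hswap]
  ring

theorem sum_R_mul_R_mul_R_eq_RringT (i j : Fin m) :
    ∑ k, ∑ a, ∑ b, ∑ c, ∑ u, V.R p c k i u * V.R p u a b k * V.R p j a b c
      = V.RringT p i j := by
  refine sum₅_reindex _ _ ![2, 3, 4, 1, 0] (by decide) fun v => ?_
  show V.R p (v 1) (v 2) i (v 0) * V.R p (v 0) (v 3) (v 4) (v 2) * V.R p j (v 3) (v 4) (v 1)
    = V.R p i (v 0) (v 1) (v 2) * V.R p j (v 3) (v 1) (v 4) * V.R p (v 0) (v 3) (v 2) (v 4)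
  rw [V.R_pairSymm p i (v 0), V.R_antisymm₂ p (v 0) (v 3) (v 2), V.R_antisymm₂ p j (v 3) (v 1)]
  ring

theorem sum_R_mul_R_mul_R_eq_RringT' (i j : Fin m) :
    ∑ k, ∑ a, ∑ b, ∑ c, ∑ u, V.R p c k a u * V.R p i u b k * V.R p j a b c
      = V.RringT p i j := by
  refine sum₅_reindex _ _ ![2, 3, 1, 4, 0] (by decide) fun v => ?_
  show V.R p (v 4) (v 2) (v 3) (v 0) * V.R p i (v 0) (v 1) (v 2) * V.R p j (v 3) (v 1) (v 4)
    = V.R p i (v 0) (v 1) (v 2) * V.R p j (v 3) (v 1) (v 4) * V.R p (v 0) (v 3) (v 2) (v 4)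
  rw [V.R_reverse p (v 0) (v 3) (v 2) (v 4)]
  ring

theorem two_mul_sum_R_mul_R_mul_R_eq_RhatT (i j : Fin m) :
    2 * ∑ k, ∑ a, ∑ b, ∑ c, ∑ u, V.R p c k b u * V.R p i a u k * V.R p j a b c
      = V.RhatT p i j := by
  set S := ∑ k, ∑ a, ∑ b, ∑ c, ∑ u, V.R p c k b u * V.R p i a u k * V.R p j a b c
  have h₁ : ∑ a, ∑ b, ∑ c, ∑ u, ∑ v, -(V.R p i b a c * V.R p j b u v * V.R p c u a v) = S := by
    refine sum₅_reindex _ _ ![0, 1, 4, 2, 3] (by decide) fun v => ?_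
    show -(V.R p i (v 1) (v 0) (v 4) * V.R p j (v 1) (v 2) (v 3) * V.R p (v 4) (v 2) (v 0) (v 3))
      = V.R p (v 3) (v 0) (v 2) (v 4) * V.R p i (v 1) (v 4) (v 0) * V.R p j (v 1) (v 2) (v 3)
    rw [V.R_antisymm₂ p i (v 1) (v 4), ← V.R_reverse p (v 3) (v 0) (v 2) (v 4)]
    ring
  have h₂ : ∑ a, ∑ b, ∑ c, ∑ u, ∑ v, -(V.R p i b a c * V.R p j b u v * V.R p u a c v) = S := by
    refine sum₅_reindex _ _ ![0, 1, 4, 3, 2] (by decide) fun v => ?_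
    show -(V.R p i (v 1) (v 0) (v 4) * V.R p j (v 1) (v 3) (v 2) * V.R p (v 3) (v 0) (v 4) (v 2))
      = V.R p (v 3) (v 0) (v 2) (v 4) * V.R p i (v 1) (v 4) (v 0) * V.R p j (v 1) (v 2) (v 3)
    rw [V.R_antisymm₂ p i (v 1) (v 4), V.R_antisymm₂ p j (v 1) (v 2),
      V.R_antisymm₂ p (v 3) (v 0) (v 2)]
    ring
  have hbianchi : V.RhatT p i j
      = ∑ a, ∑ b, ∑ c, ∑ u, ∑ v, -(V.R p i b a c * V.R p j b u v * V.R p c u a v)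
        + ∑ a, ∑ b, ∑ c, ∑ u, ∑ v, -(V.R p i b a c * V.R p j b u v * V.R p u a c v) := by
    simp only [RhatT, ← Finset.sum_add_distrib]
    refine Finset.sum_congr rfl fun a _ => Finset.sum_congr rfl fun b _ =>
      Finset.sum_congr rfl fun c _ => Finset.sum_congr rfl fun u _ =>
      Finset.sum_congr rfl fun v _ => ?_
    linear_combination (V.R p i b a c * V.R p j b u v) * V.R_bianchi₁ p a c u v
  rw [hbianchi, h₁, h₂, two_mul]

theorem sum_R_mul_R_mul_R_eq_sum_ric_mul_R_mul_R (i j : Fin m) :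
    ∑ k, ∑ a, ∑ b, ∑ c, ∑ u, V.R p c k k u * V.R p i a b u * V.R p j a b c
      = ∑ c, ∑ d, ∑ a, ∑ b, V.ric p c d * V.R p i a b c * V.R p j a b d := by
  simp only [ric, Finset.sum_mul]
  refine sum₅_reindex _ (fun c d a b k => V.R p k c d k * V.R p i a b c * V.R p j a b d)
    ![4, 2, 3, 1, 0] (by decide) fun v => ?_
  show V.R p (v 1) (v 4) (v 4) (v 0) * V.R p i (v 2) (v 3) (v 0) * V.R p j (v 2) (v 3) (v 1)
    = V.R p (v 4) (v 0) (v 1) (v 4) * V.R p i (v 2) (v 3) (v 0) * V.R p j (v 2) (v 3) (v 1)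
  rw [V.R_pairSymm p (v 4) (v 0)]

theorem sum_laplacian_R_mul_R_eq (i j : Fin m) :
    ∑ k, ∑ a, ∑ b, ∑ c, V.d2R p i a b c k k * V.R p j a b c
      = 2 * ∑ a, ∑ b, ∑ c, V.ric2 p a b i c * V.R p j a b c
        + 2 * ∑ a, ∑ b, ∑ c, V.ric2 p i c a b * V.R p j a b c
        + 2 * ∑ c, ∑ d, ∑ a, ∑ b, V.ric p c d * V.R p i a b c * V.R p j a b d
        + 4 * V.RringT p i j + V.RhatT p i j := by
  rw [sum_laplacian_R_mul_R_eq_two_mul_sum, sum_d2R_commute_mul_R, sum_d2R_div_mul_R,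
    sum_R_mul_R_mul_R_eq_RringT, sum_R_mul_R_mul_R_eq_RringT',
    sum_R_mul_R_mul_R_eq_sum_ric_mul_R_mul_R, ← two_mul_sum_R_mul_R_mul_R_eq_RhatT]
  ring

end RiemannModel

/-- the Laplacian identity for `R_{iabc}R_{jabc}` on any
Riemannian manifold:
`(R_{iabc}R_{jabc})_{;kk} = 2B_{ij} + 8R̊_{ij} + 2R̂_{ij} + 4ρ_{cd}R_{iabc}R_{jabd}
 + 2ρ_{ic;ab}R_{jabc} + 2ρ_{jc;ab}R_{iabc} + 2ρ_{ab;ic}R_{jabc} + 2ρ_{ab;jc}R_{iabc}`. -/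
theorem laplacian_RR2 {m : ℕ} {M : Type} (V : RiemannModel m M) :
    ∀ (p : M) (i j : Fin m),
      (∑ k, ∑ a, ∑ b, ∑ c,
        (V.d2R p i a b c k k * V.R p j a b c +
         2 * V.dR p i a b c k * V.dR p j a b c k +
         V.R p i a b c * V.d2R p j a b c k k)) =
      2 * V.Bt p i j + 8 * V.RringT p i j + 2 * V.RhatT p i j +
      4 * (∑ c, ∑ d, ∑ a, ∑ b, V.ric p c d * V.R p i a b c * V.R p j a b d) +
      2 * (∑ a, ∑ b, ∑ c, V.ric2 p i c a b * V.R p j a b c) +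
      2 * (∑ a, ∑ b, ∑ c, V.ric2 p j c a b * V.R p i a b c) +
      2 * (∑ a, ∑ b, ∑ c, V.ric2 p a b i c * V.R p j a b c) +
      2 * (∑ a, ∑ b, ∑ c, V.ric2 p a b j c * V.R p i a b c) := by
  intro p i j
  have hB : ∑ k, ∑ a, ∑ b, ∑ c, 2 * V.dR p i a b c k * V.dR p j a b c k = 2 * V.Bt p i j := by
    simp only [RiemannModel.Bt, Finset.mul_sum, mul_assoc]
  simp only [Finset.sum_add_distrib, hB]
  simp only [mul_comm (V.R p i _ _ _)]
  rw [V.sum_laplacian_R_mul_R_eq, V.sum_laplacian_R_mul_R_eq, V.RringT_symm, V.RhatT_symm,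
    V.sum_ric_mul_R_mul_R_symm]
  ring
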